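/- arXiv:1705.04959 — 2 statements merged into one kernel-verified Lean document; each statement's English description precedes it below -/
import Mathlib

section
/- Suppose the boundary parameters satisfy, componentwise, β > 0, λ < 0, β + T·b + λ > 0, γ < 0, μ > 0, and γ + T·c + μ < 0, with T > 0. Then P ≡ 0 is a feasible solution of M-CLP* with objective value 0, it is optimal, i.e. every feasible solution P of M-CLP* satisfies z*(P) ≥ 0, and it is the unique optimal solution: any feasible P with z*(P) = 0 satisfies P(s) = 0 for all s ∈ [0,T]. -/
open MeasureTheory Filter

/-- A feasible solution of M-CLP*. -/
def DualFeasible {K J : ℕ} (A : Matrix (Fin K) (Fin J) ℝ) (c γ μ : Fin J → ℝ) (T : ℝ)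
    (P : ℝ → Fin K → ℝ) : Prop :=
  (∀ k, MonotoneOn (fun s => P s k) (Set.Icc 0 T)) ∧
  (∀ k, ∀ s ∈ Set.Ico (0:ℝ) T,
    Tendsto (fun r => P r k) (nhdsWithin s (Set.Ioi s)) (nhds (P s k))) ∧
  (∀ k, 0 ≤ P 0 k) ∧
  (∀ s ∈ Set.Ico (0:ℝ) T, ∀ j, γ j + s * c j ≤ A.transpose.mulVec (P s) j) ∧
  (∀ j, γ j + T * c j + μ j ≤ A.transpose.mulVec (P T) j)

/-- `ν i` is the Lebesgue–Stieltjes measure on `[0,T]` of the (right-continuous,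
nondecreasing) function `F · i`, with the convention `F (0-) i = 0`. -/
def LSFamily {I : Type*} (T : ℝ) (F : ℝ → I → ℝ) (ν : I → Measure ℝ) : Prop :=
  ∀ i, ν i (Set.Icc 0 T)ᶜ = 0 ∧
    ∀ x ∈ Set.Icc (0:ℝ) T, ν i (Set.Icc 0 x) = ENNReal.ofReal (F x i)

/-- The M-CLP* objective `z*(P) = λᵀP(0) + Σ_k ∫_{[0,T]} (β_k + (T-s)b_k) dP_k(s)`,
the measures `dP_k` being given by `ν`. -/
noncomputable def zDual {K : ℕ} (b β lam : Fin K → ℝ) (T : ℝ) (P : ℝ → Fin K → ℝ)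
    (ν : Fin K → Measure ℝ) : ℝ :=
  (∑ k, lam k * P 0 k) + ∑ k, ∫ s in Set.Icc (0:ℝ) T, (β k + (T - s) * b k) ∂(ν k)

/-!
Split off the atom of `dP_k` at `0`: the `k`-th summand of `z*` becomes
`(β_k + T b_k + λ_k) P_k(0) + ∫_{(0,T]} (β_k + (T-s) b_k) dP_k(s)`. The first weight is positive
by hypothesis; the integrand is an affine function bounded below on `[0,T]` by its endpoint
values `β_k > 0` and `β_k + T b_k > -λ_k > 0`. Hence `z*(P) ≥ 0`, and `z*(P) = 0` forces
`P_k(0) = 0` and `dP_k((0,T]) = 0`, so `P_k(T) = dP_k([0,T]) = 0` and monotonicity gives `P ≡ 0`.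
-/

open Set

lemma add_mul_le_max_of_mem_Icc {a c T s : ℝ} (hs : s ∈ Icc 0 T) :
    a + s * c ≤ max a (a + T * c) := by
  rcases le_total 0 c with hc | hc
  · exact (by nlinarith [hs.2] : a + s * c ≤ a + T * c).trans (le_max_right _ _)
  · exact (by nlinarith [hs.1] : a + s * c ≤ a).trans (le_max_left _ _)

lemma min_le_add_mul_of_mem_Icc {a c T s : ℝ} (hs : s ∈ Icc 0 T) :
    min a (a + T * c) ≤ a + s * c := by
  rcases le_total 0 c with hc | hc
  · exact (min_le_left _ _).trans (by nlinarith [hs.1])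
  · exact (min_le_right _ _).trans (by nlinarith [hs.2])

lemma setIntegral_Icc_eq_measureReal_singleton_smul_add {E : Type*} [NormedAddCommGroup E]
    [NormedSpace ℝ E] [CompleteSpace E] {ν : Measure ℝ} {f : ℝ → E} {a b : ℝ} (hab : a ≤ b)
    (hf : IntegrableOn f (Icc a b) ν) :
    ∫ x in Icc a b, f x ∂ν = ν.real {a} • f a + ∫ x in Ioc a b, f x ∂ν := by
  rw [← Ioc_insert_left hab, insert_eq] at hf ⊢
  rw [setIntegral_union (by simp) measurableSet_Ioc (hf.mono_set subset_union_left)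
    (hf.mono_set subset_union_right), integral_singleton]

lemma measureReal_Icc_eq_measureReal_singleton_add {ν : Measure ℝ} {a b : ℝ} (hab : a ≤ b)
    (hfin : ν (Icc a b) ≠ ⊤) :
    ν.real (Icc a b) = ν.real {a} + ν.real (Ioc a b) := by
  rw [← Ioc_insert_left hab, insert_eq] at hfin ⊢
  exact measureReal_union (by simp) measurableSet_Ioc
    (measure_ne_top_of_subset subset_union_left hfin)
    (measure_ne_top_of_subset subset_union_right hfin)

section StieltjesComponent

variable {ν : Measure ℝ} {F f : ℝ → ℝ} {T lam m : ℝ}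

lemma measureReal_singleton_zero_of_stieltjes (hT : 0 ≤ T)
    (hν : ∀ x ∈ Icc 0 T, ν (Icc 0 x) = ENNReal.ofReal (F x)) (hF0 : 0 ≤ F 0) :
    ν.real {0} = F 0 := by
  rw [measureReal_def, ← Icc_self, hν 0 ⟨le_rfl, hT⟩, ENNReal.toReal_ofReal hF0]

lemma atom_add_measureReal_Ioc_le (hT : 0 ≤ T)
    (hν : ∀ x ∈ Icc 0 T, ν (Icc 0 x) = ENNReal.ofReal (F x)) (hF0 : 0 ≤ F 0)
    (hf : ContinuousOn f (Icc 0 T)) (hm : ∀ x ∈ Ioc 0 T, m ≤ f x) :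
    (f 0 + lam) * F 0 + m * ν.real (Ioc 0 T) ≤ lam * F 0 + ∫ x in Icc 0 T, f x ∂ν := by
  have hfin : ν (Icc 0 T) ≠ ⊤ := by rw [hν T ⟨hT, le_rfl⟩]; exact ENNReal.ofReal_ne_top
  have hint := hf.integrableOn_of_subset_isCompact isCompact_Icc measurableSet_Icc subset_rfl hfin
  have hIoc : m * ν.real (Ioc 0 T) ≤ ∫ x in Ioc 0 T, f x ∂ν :=
    setIntegral_ge_of_const_le_real measurableSet_Ioc
      (measure_ne_top_of_subset Ioc_subset_Icc_self hfin) hm (hint.mono_set Ioc_subset_Icc_self)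
  rw [setIntegral_Icc_eq_measureReal_singleton_smul_add hT hint,
    measureReal_singleton_zero_of_stieltjes hT hν hF0, smul_eq_mul]
  linarith

lemma lam_mul_add_setIntegral_nonneg (hT : 0 ≤ T)
    (hν : ∀ x ∈ Icc 0 T, ν (Icc 0 x) = ENNReal.ofReal (F x)) (hF0 : 0 ≤ F 0)
    (hf : ContinuousOn f (Icc 0 T)) (hm : ∀ x ∈ Ioc 0 T, m ≤ f x)
    (hatom : 0 ≤ f 0 + lam) (hm0 : 0 ≤ m) :
    0 ≤ lam * F 0 + ∫ x in Icc 0 T, f x ∂ν :=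
  (add_nonneg (mul_nonneg hatom hF0) (mul_nonneg hm0 measureReal_nonneg)).trans
    (atom_add_measureReal_Ioc_le hT hν hF0 hf hm)

lemma eq_zero_of_lam_mul_add_setIntegral_eq_zero (hT : 0 ≤ T)
    (hν : ∀ x ∈ Icc 0 T, ν (Icc 0 x) = ENNReal.ofReal (F x)) (hF : MonotoneOn F (Icc 0 T))
    (hF0 : 0 ≤ F 0) (hf : ContinuousOn f (Icc 0 T)) (hm : ∀ x ∈ Ioc 0 T, m ≤ f x)
    (hatom : 0 < f 0 + lam) (hm0 : 0 < m) (hzero : lam * F 0 + ∫ x in Icc 0 T, f x ∂ν = 0) :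
    ∀ s ∈ Icc 0 T, F s = 0 := by
  have hbound := atom_add_measureReal_Ioc_le (lam := lam) hT hν hF0 hf hm
  have hIoc_nonneg : 0 ≤ ν.real (Ioc 0 T) := measureReal_nonneg
  have hF0_eq : F 0 = 0 := by nlinarith
  have hIoc : ν.real (Ioc 0 T) = 0 := by nlinarith
  have hFT : F T = 0 := by
    have hFT_nonneg : 0 ≤ F T := hF0.trans (hF ⟨le_rfl, hT⟩ ⟨hT, le_rfl⟩ hT)
    have hfin : ν (Icc 0 T) ≠ ⊤ := by rw [hν T ⟨hT, le_rfl⟩]; exact ENNReal.ofReal_ne_top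
    have := measureReal_Icc_eq_measureReal_singleton_add hT hfin
    rw [measureReal_def, hν T ⟨hT, le_rfl⟩, ENNReal.toReal_ofReal hFT_nonneg,
      measureReal_singleton_zero_of_stieltjes hT hν hF0] at this
    linarith
  intro s hs
  linarith [hF ⟨le_rfl, hT⟩ hs hs.1, hF hs ⟨hT, le_rfl⟩ hs.2]

end StieltjesComponent

lemma dualFeasible_zero {K J : ℕ} (A : Matrix (Fin K) (Fin J) ℝ) {c γ μ : Fin J → ℝ} {T : ℝ}
    (hγ : ∀ j, γ j ≤ 0) (hγc : ∀ j, γ j + T * c j ≤ 0) (hγm : ∀ j, γ j + T * c j + μ j ≤ 0) :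
    DualFeasible A c γ μ T (fun _ => 0) := by
  refine ⟨fun _ => monotoneOn_const, fun _ _ _ => tendsto_const_nhds, fun _ => le_rfl,
    fun s hs j => ?_, fun j => ?_⟩
  · rw [Matrix.mulVec_zero]
    exact (add_mul_le_max_of_mem_Icc (Ico_subset_Icc_self hs)).trans (max_le (hγ j) (hγc j))
  · rw [Matrix.mulVec_zero]
    exact hγm j

lemma zDual_eq_sum {K : ℕ} (b β lam : Fin K → ℝ) (T : ℝ) (P : ℝ → Fin K → ℝ)
    (ν : Fin K → Measure ℝ) :
    zDual b β lam T P ν =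
      ∑ k, (lam k * P 0 k + ∫ s in Icc 0 T, (β k + (T - s) * b k) ∂ν k) :=
  Finset.sum_add_distrib.symm

lemma zDual_zero {K : ℕ} {b β lam : Fin K → ℝ} {T : ℝ} {ν : Fin K → Measure ℝ} (hT : 0 ≤ T)
    (hν : LSFamily T (fun _ => (0 : Fin K → ℝ)) ν) :
    zDual b β lam T (fun _ => 0) ν = 0 := by
  have hrestrict (k : Fin K) : (ν k).restrict (Icc 0 T) = 0 :=
    Measure.restrict_eq_zero.mpr (by simpa using (hν k).2 T ⟨hT, le_rfl⟩)
  simp [zDual, hrestrict]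

/-- Under the sign conditions on the boundary parameters, `P ≡ 0` is a feasible
solution of M-CLP* with objective value `0`, it is optimal, and it is the unique
optimal solution. -/
theorem zero_is_unique_optimal_mclpStar {K J : ℕ}
    (A : Matrix (Fin K) (Fin J) ℝ) (b β lam : Fin K → ℝ) (c γ μ : Fin J → ℝ) (T : ℝ)
    (hT : 0 < T)
    (hβ : ∀ k, 0 < β k) (hlam : ∀ k, lam k < 0) (hβl : ∀ k, 0 < β k + T * b k + lam k)
    (hγ : ∀ j, γ j < 0) (hμ : ∀ j, 0 < μ j) (hγm : ∀ j, γ j + T * c j + μ j < 0) :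
    DualFeasible A c γ μ T (fun _ : ℝ => (0 : Fin K → ℝ)) ∧
    (∀ ν : Fin K → Measure ℝ, LSFamily T (fun _ : ℝ => (0 : Fin K → ℝ)) ν →
      zDual b β lam T (fun _ : ℝ => (0 : Fin K → ℝ)) ν = 0) ∧
    (∀ (P : ℝ → Fin K → ℝ) (ν : Fin K → Measure ℝ),
      DualFeasible A c γ μ T P → LSFamily T P ν →
      0 ≤ zDual b β lam T P ν) ∧
    (∀ (P : ℝ → Fin K → ℝ) (ν : Fin K → Measure ℝ),
      DualFeasible A c γ μ T P → LSFamily T P ν →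
      zDual b β lam T P ν = 0 → ∀ s ∈ Set.Icc (0:ℝ) T, ∀ k, P s k = 0) := by
  have hweight (k : Fin K) (x : ℝ) (hx : x ∈ Ioc 0 T) :
      min (β k) (β k + T * b k) ≤ β k + (T - x) * b k :=
    min_le_add_mul_of_mem_Icc ⟨by linarith [hx.2], by linarith [hx.1]⟩
  have hweight_pos (k : Fin K) : 0 < min (β k) (β k + T * b k) :=
    lt_min (hβ k) (by linarith [hβl k, hlam k])
  have hatom (k : Fin K) : 0 < β k + (T - 0) * b k + lam k := by simpa using hβl k
  have hcont (k : Fin K) : ContinuousOn (fun s => β k + (T - s) * b k) (Icc 0 T) := by fun_prop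
  have hterm_nonneg (P : ℝ → Fin K → ℝ) (ν : Fin K → Measure ℝ) (hP : DualFeasible A c γ μ T P)
      (hν : LSFamily T P ν) (k : Fin K) :
      0 ≤ lam k * P 0 k + ∫ s in Icc 0 T, (β k + (T - s) * b k) ∂ν k :=
    lam_mul_add_setIntegral_nonneg hT.le (hν k).2 (hP.2.2.1 k) (hcont k) (hweight k)
      (hatom k).le (hweight_pos k).le
  refine ⟨dualFeasible_zero A (fun j => (hγ j).le) (fun j => by linarith [hγm j, hμ j])
      (fun j => (hγm j).le), fun ν hν => zDual_zero hT.le hν, fun P ν hP hν => ?_,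
      fun P ν hP hν hz s hs k => ?_⟩
  · rw [zDual_eq_sum]
    exact Finset.sum_nonneg fun k _ => hterm_nonneg P ν hP hν k
  · rw [zDual_eq_sum, Finset.sum_eq_zero_iff_of_nonneg fun k _ => hterm_nonneg P ν hP hν k] at hz
    exact eq_zero_of_lam_mul_add_setIntegral_eq_zero hT.le (hν k).2 (hP.1 k) (hP.2.2.1 k)
      (hcont k) (hweight k) (hatom k) (hweight_pos k) (hz k (Finset.mem_univ k)) s hs
end

section
/- Weak duality holds between M-CLP and M-CLP*: for every feasible solution U of M-CLP and every feasible solution P of M-CLP*, z(U) ≤ z*(P). -/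
open MeasureTheory Filter

/-- A feasible solution of M-CLP. -/
def PrimalFeasible {K J : ℕ} (A : Matrix (Fin K) (Fin J) ℝ) (b β lam : Fin K → ℝ) (T : ℝ)
    (U : ℝ → Fin J → ℝ) : Prop :=
  (∀ j, MonotoneOn (fun t => U t j) (Set.Icc 0 T)) ∧
  (∀ j, ∀ t ∈ Set.Ico (0:ℝ) T,
    Tendsto (fun s => U s j) (nhdsWithin t (Set.Ioi t)) (nhds (U t j))) ∧
  (∀ j, 0 ≤ U 0 j) ∧
  (∀ t ∈ Set.Ico (0:ℝ) T, ∀ k, A.mulVec (U t) k ≤ β k + t * b k) ∧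
  (∀ k, A.mulVec (U T) k ≤ β k + T * b k + lam k)

/-- The M-CLP objective. -/
noncomputable def zPrimal {J : ℕ} (c γ μ : Fin J → ℝ) (T : ℝ) (U : ℝ → Fin J → ℝ)
    (ν : Fin J → Measure ℝ) : ℝ :=
  (∑ j, μ j * U 0 j) + ∑ j, ∫ t in Set.Icc (0:ℝ) T, (γ j + (T - t) * c j) ∂(ν j)

/-- The primal slack `x(t) = β + t·b − A·U(t)` for `0 ≤ t < T`, and
`x(T) = β + T·b + λ − A·U(T)`. -/
noncomputable def xSlack {K J : ℕ} (A : Matrix (Fin K) (Fin J) ℝ) (b β lam : Fin K → ℝ)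
    (T : ℝ) (U : ℝ → Fin J → ℝ) (t : ℝ) (k : Fin K) : ℝ :=
  β k + t * b k + (if t < T then 0 else lam k) - A.mulVec (U t) k

/-- The dual slack `q(s) = Aᵀ·P(s) − γ − s·c` for `0 ≤ s < T`, and
`q(T) = Aᵀ·P(T) − γ − T·c − μ`. -/
noncomputable def qSlack {K J : ℕ} (A : Matrix (Fin K) (Fin J) ℝ) (c γ μ : Fin J → ℝ)
    (T : ℝ) (P : ℝ → Fin K → ℝ) (s : ℝ) (j : Fin J) : ℝ :=
  A.transpose.mulVec (P s) j - γ j - s * c j - (if s < T then 0 else μ j)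

/-!
Integrate the dual constraint `Aᵀ P(T - t) ≥ γ + (T - t) c` (with the extra `μ` at `t = 0`)
against `dU(t)`, and the primal constraint `A U(T - s) ≤ β + (T - s) b` (with the extra `λ` at
`s = 0`) against `dP(s)`. The two middle terms coincide: since the measures live on `[0, T]`,
`P_k(T - t) = dP_k(Iic (T - t))`, so by Fubini both `∫ P_k(T - t) dU_j(t)` and
`∫ U_j(T - s) dP_k(s)` equal the `dU_j ⊗ dP_k`-mass of the triangle `{t + s ≤ T}`.
-/

open Set Matrix

theorem lintegral_measure_Iic_sub_comm (ν ρ : Measure ℝ) [SFinite ν] [SFinite ρ] (T : ℝ) :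
    ∫⁻ t, ρ (Iic (T - t)) ∂ν = ∫⁻ s, ν (Iic (T - s)) ∂ρ := by
  have hM : MeasurableSet {p : ℝ × ℝ | p.1 + p.2 ≤ T} :=
    measurableSet_le (by fun_prop) measurable_const
  have h₁ (t : ℝ) : Prod.mk t ⁻¹' {p : ℝ × ℝ | p.1 + p.2 ≤ T} = Iic (T - t) := by
    ext; simp [le_sub_iff_add_le']
  have h₂ (s : ℝ) : (fun t => (t, s)) ⁻¹' {p : ℝ × ℝ | p.1 + p.2 ≤ T} = Iic (T - s) := by
    ext; simp [le_sub_iff_add_le]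
  calc ∫⁻ t, ρ (Iic (T - t)) ∂ν = ν.prod ρ {p : ℝ × ℝ | p.1 + p.2 ≤ T} := by
        simp only [Measure.prod_apply hM, h₁]
    _ = ∫⁻ s, ν (Iic (T - s)) ∂ρ := by simp only [Measure.prod_apply_symm hM, h₂]

theorem antitone_measure_Iic_sub (ρ : Measure ℝ) (T : ℝ) :
    Antitone fun t => ρ (Iic (T - t)) :=
  fun _ _ hst => measure_mono (Iic_subset_Iic.2 (by linarith))

theorem integrable_measureReal_Iic_sub (ν ρ : Measure ℝ) [IsFiniteMeasure ν] [IsFiniteMeasure ρ]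
    (T : ℝ) : Integrable (fun t => ρ.real (Iic (T - t))) ν :=
  .of_bound (antitone_measure_Iic_sub ρ T).measurable.ennreal_toReal.aestronglyMeasurable
    (ρ.real univ) (ae_of_all _ fun _ => by
      rw [Real.norm_of_nonneg measureReal_nonneg]; exact measureReal_mono (subset_univ _))

theorem integral_measureReal_Iic_sub_comm (ν ρ : Measure ℝ) [IsFiniteMeasure ν]
    [IsFiniteMeasure ρ] (T : ℝ) :
    ∫ t, ρ.real (Iic (T - t)) ∂ν = ∫ s, ν.real (Iic (T - s)) ∂ρ := by
  simp only [measureReal_def]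
  rw [integral_toReal (antitone_measure_Iic_sub ρ T).measurable.aemeasurable
      (ae_of_all _ fun _ => measure_lt_top _ _),
    integral_toReal (antitone_measure_Iic_sub ν T).measurable.aemeasurable
      (ae_of_all _ fun _ => measure_lt_top _ _),
    lintegral_measure_Iic_sub_comm]

theorem integral_add_indicator_singleton {α : Type*} [MeasurableSpace α]
    [MeasurableSingletonClass α] {ν : Measure α} [IsFiniteMeasure ν] {g : α → ℝ}
    (hg : Integrable g ν) (a : α) (m : ℝ) :
    ∫ x, g x + ({a} : Set α).indicator (fun _ => m) x ∂ν = m * ν.real {a} + ∫ x, g x ∂ν := by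
  rw [integral_add hg ((integrable_const m).indicator (measurableSet_singleton a)),
    integral_indicator_const _ (measurableSet_singleton a), smul_eq_mul, mul_comm, add_comm]

theorem integrable_of_ae_mem_Icc {ν : Measure ℝ} [IsFiniteMeasure ν] {a b : ℝ}
    (hν : ∀ᵐ t ∂ν, t ∈ Icc a b) {f : ℝ → ℝ} (hf : Continuous f) : Integrable f ν := by
  simpa only [IntegrableOn, Measure.restrict_eq_self_of_ae_mem hν] using
    hf.integrableOn_Icc (μ := ν) (a := a) (b := b)

theorem nonneg_of_monotoneOn_Icc {f : ℝ → ℝ} {T : ℝ} (hf : MonotoneOn f (Icc 0 T)) (h₀ : 0 ≤ f 0)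
    {t : ℝ} (ht : t ∈ Icc 0 T) : 0 ≤ f t :=
  h₀.trans (hf ⟨le_rfl, ht.1.trans ht.2⟩ ht ht.1)

namespace LSFamily

variable {I : Type*} {T : ℝ} {F : ℝ → I → ℝ} {ν : I → Measure ℝ}

theorem ae_mem (h : LSFamily T F ν) (i : I) : ∀ᵐ t ∂ν i, t ∈ Icc 0 T := (h i).1

theorem isFiniteMeasure (h : LSFamily T F ν) (hT : 0 ≤ T) (i : I) : IsFiniteMeasure (ν i) := by
  rw [← Measure.restrict_eq_self_of_ae_mem (h.ae_mem i), isFiniteMeasure_restrict,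
    (h i).2 T ⟨hT, le_rfl⟩]
  exact ENNReal.ofReal_ne_top

theorem measureReal_Iic (h : LSFamily T F ν) {i : I} {x : ℝ} (hx : x ∈ Icc 0 T)
    (hF : 0 ≤ F x i) : (ν i).real (Iic x) = F x i := by
  have hIic : Iic x ∩ Icc 0 T = Icc 0 x := by
    rw [inter_comm, ← Ici_inter_Iic, ← Ici_inter_Iic, inter_assoc, Iic_inter_Iic,
      min_eq_right hx.2]
  rw [measureReal_def, ← measure_inter_conull (h i).1, hIic, (h i).2 x hx,
    ENNReal.toReal_ofReal hF]

theorem measureReal_singleton_zero (h : LSFamily T F ν) (hT : 0 ≤ T) {i : I} (hF : 0 ≤ F 0 i) :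
    (ν i).real {0} = F 0 i := by
  rw [measureReal_def, ← Icc_self, (h i).2 0 ⟨le_rfl, hT⟩, ENNReal.toReal_ofReal hF]

end LSFamily

section Feasibility

variable {K J : ℕ} {A : Matrix (Fin K) (Fin J) ℝ} {T : ℝ}

namespace PrimalFeasible

variable {b β lam : Fin K → ℝ} {U : ℝ → Fin J → ℝ}

theorem nonneg (hU : PrimalFeasible A b β lam T U) {t : ℝ} (ht : t ∈ Icc 0 T) (j : Fin J) :
    0 ≤ U t j :=
  nonneg_of_monotoneOn_Icc (hU.1 j) (hU.2.2.1 j) ht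

theorem mulVec_sub_le (hU : PrimalFeasible A b β lam T U) {s : ℝ} (hs : s ∈ Icc 0 T)
    (k : Fin K) :
    (A *ᵥ U (T - s)) k ≤ β k + (T - s) * b k + ({0} : Set ℝ).indicator (fun _ => lam k) s := by
  obtain ⟨-, -, -, hlt, hT⟩ := hU
  rcases hs.1.eq_or_lt with rfl | hs₀
  · simpa using hT k
  · rw [indicator_of_notMem (mem_singleton_iff.not.2 hs₀.ne'), add_zero]
    exact hlt _ ⟨by linarith [hs.2], by linarith⟩ k

theorem sum_integral_le_add_integral (hU : PrimalFeasible A b β lam T U)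
    {ν : Fin J → Measure ℝ} [∀ j, IsFiniteMeasure (ν j)]
    (hν : ∀ j, ∀ x ∈ Icc 0 T, (ν j).real (Iic x) = U x j) {ρ : Measure ℝ} [IsFiniteMeasure ρ]
    (hρ : ∀ᵐ s ∂ρ, s ∈ Icc 0 T) (k : Fin K) :
    ∑ j, A k j * ∫ s, (ν j).real (Iic (T - s)) ∂ρ ≤
      lam k * ρ.real {0} + ∫ s, β k + (T - s) * b k ∂ρ := by
  have hg : Integrable (fun s => β k + (T - s) * b k) ρ := integrable_of_ae_mem_Icc hρ (by fun_prop)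
  have hG (j : Fin J) : Integrable (fun s => A k j * (ν j).real (Iic (T - s))) ρ :=
    (integrable_measureReal_Iic_sub ρ (ν j) T).const_mul _
  calc ∑ j, A k j * ∫ s, (ν j).real (Iic (T - s)) ∂ρ
      = ∫ s, ∑ j, A k j * (ν j).real (Iic (T - s)) ∂ρ := by
        rw [integral_finsetSum _ fun j _ => hG j]; simp_rw [integral_const_mul]
    _ ≤ ∫ s, β k + (T - s) * b k + ({0} : Set ℝ).indicator (fun _ => lam k) s ∂ρ := by
        refine integral_mono_ae (integrable_finsetSum _ fun j _ => hG j)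
          (hg.add ((integrable_const _).indicator (measurableSet_singleton 0))) ?_
        filter_upwards [hρ] with s hs
        have hUs : U (T - s) = fun j => (ν j).real (Iic (T - s)) :=
          funext fun j => (hν j _ ⟨by linarith [hs.2], by linarith [hs.1]⟩).symm
        simpa [hUs, mulVec, dotProduct] using hU.mulVec_sub_le hs k
    _ = lam k * ρ.real {0} + ∫ s, β k + (T - s) * b k ∂ρ :=
        integral_add_indicator_singleton hg 0 (lam k)

end PrimalFeasible

namespace DualFeasible

variable {c γ μ : Fin J → ℝ} {P : ℝ → Fin K → ℝ}

theorem nonneg (hP : DualFeasible A c γ μ T P) {s : ℝ} (hs : s ∈ Icc 0 T) (k : Fin K) :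
    0 ≤ P s k :=
  nonneg_of_monotoneOn_Icc (hP.1 k) (hP.2.2.1 k) hs

theorem le_mulVec_sub (hP : DualFeasible A c γ μ T P) {t : ℝ} (ht : t ∈ Icc 0 T) (j : Fin J) :
    γ j + (T - t) * c j + ({0} : Set ℝ).indicator (fun _ => μ j) t ≤ (Aᵀ *ᵥ P (T - t)) j := by
  obtain ⟨-, -, -, hlt, hT⟩ := hP
  rcases ht.1.eq_or_lt with rfl | ht₀
  · simpa using hT j
  · rw [indicator_of_notMem (mem_singleton_iff.not.2 ht₀.ne'), add_zero]
    exact hlt _ ⟨by linarith [ht.2], by linarith⟩ j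

theorem add_integral_le_sum_integral (hP : DualFeasible A c γ μ T P)
    {ρ : Fin K → Measure ℝ} [∀ k, IsFiniteMeasure (ρ k)]
    (hρ : ∀ k, ∀ x ∈ Icc 0 T, (ρ k).real (Iic x) = P x k) {ν : Measure ℝ} [IsFiniteMeasure ν]
    (hν : ∀ᵐ t ∂ν, t ∈ Icc 0 T) (j : Fin J) :
    μ j * ν.real {0} + ∫ t, γ j + (T - t) * c j ∂ν ≤
      ∑ k, A k j * ∫ t, (ρ k).real (Iic (T - t)) ∂ν := by
  have hg : Integrable (fun t => γ j + (T - t) * c j) ν := integrable_of_ae_mem_Icc hν (by fun_prop)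
  have hG (k : Fin K) : Integrable (fun t => A k j * (ρ k).real (Iic (T - t))) ν :=
    (integrable_measureReal_Iic_sub ν (ρ k) T).const_mul _
  calc μ j * ν.real {0} + ∫ t, γ j + (T - t) * c j ∂ν
      = ∫ t, γ j + (T - t) * c j + ({0} : Set ℝ).indicator (fun _ => μ j) t ∂ν :=
        (integral_add_indicator_singleton hg 0 (μ j)).symm
    _ ≤ ∫ t, ∑ k, A k j * (ρ k).real (Iic (T - t)) ∂ν := by
        refine integral_mono_ae
          (hg.add ((integrable_const _).indicator (measurableSet_singleton 0)))
          (integrable_finsetSum _ fun k _ => hG k) ?_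
        filter_upwards [hν] with t ht
        have hPt : P (T - t) = fun k => (ρ k).real (Iic (T - t)) :=
          funext fun k => (hρ k _ ⟨by linarith [ht.2], by linarith [ht.1]⟩).symm
        simpa [hPt, mulVec, dotProduct] using hP.le_mulVec_sub ht j
    _ = ∑ k, A k j * ∫ t, (ρ k).real (Iic (T - t)) ∂ν := by
        rw [integral_finsetSum _ fun k _ => hG k]; simp_rw [integral_const_mul]

end DualFeasible

end Feasibility

/-- Weak duality between M-CLP and M-CLP*: `z(U) ≤ z*(P)` for every feasible `U`
of M-CLP and feasible `P` of M-CLP*. -/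
theorem weak_duality {K J : ℕ}
    (A : Matrix (Fin K) (Fin J) ℝ) (b β lam : Fin K → ℝ) (c γ μ : Fin J → ℝ) (T : ℝ)
    (hT : 0 < T)
    (U : ℝ → Fin J → ℝ) (P : ℝ → Fin K → ℝ)
    (νU : Fin J → Measure ℝ) (νP : Fin K → Measure ℝ)
    (hU : PrimalFeasible A b β lam T U) (hP : DualFeasible A c γ μ T P)
    (hνU : LSFamily T U νU) (hνP : LSFamily T P νP) :
    zPrimal c γ μ T U νU ≤ zDual b β lam T P νP := by
  have hνU_fin := hνU.isFiniteMeasure hT.le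
  have hνP_fin := hνP.isFiniteMeasure hT.le
  have hUcdf (j : Fin J) (x : ℝ) (hx : x ∈ Icc 0 T) : (νU j).real (Iic x) = U x j :=
    hνU.measureReal_Iic hx (hU.nonneg hx j)
  have hPcdf (k : Fin K) (x : ℝ) (hx : x ∈ Icc 0 T) : (νP k).real (Iic x) = P x k :=
    hνP.measureReal_Iic hx (hP.nonneg hx k)
  have hU₀ (j : Fin J) : U 0 j = (νU j).real {0} :=
    (hνU.measureReal_singleton_zero hT.le (hU.nonneg ⟨le_rfl, hT.le⟩ j)).symm
  have hP₀ (k : Fin K) : P 0 k = (νP k).real {0} :=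
    (hνP.measureReal_singleton_zero hT.le (hP.nonneg ⟨le_rfl, hT.le⟩ k)).symm
  simp only [zPrimal, zDual, Measure.restrict_eq_self_of_ae_mem (hνU.ae_mem _),
    Measure.restrict_eq_self_of_ae_mem (hνP.ae_mem _), hU₀, hP₀, ← Finset.sum_add_distrib]
  calc ∑ j, (μ j * (νU j).real {0} + ∫ t, γ j + (T - t) * c j ∂νU j)
      ≤ ∑ j, ∑ k, A k j * ∫ t, (νP k).real (Iic (T - t)) ∂νU j :=
        Finset.sum_le_sum fun j _ => hP.add_integral_le_sum_integral hPcdf (hνU.ae_mem j) j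
    _ = ∑ k, ∑ j, A k j * ∫ s, (νU j).real (Iic (T - s)) ∂νP k := by
        rw [Finset.sum_comm]; simp only [integral_measureReal_Iic_sub_comm]
    _ ≤ ∑ k, (lam k * (νP k).real {0} + ∫ s, β k + (T - s) * b k ∂νP k) :=
        Finset.sum_le_sum fun k _ => hU.sum_integral_le_add_integral hUcdf (hνP.ae_mem k) k
end
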